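/- Let 1 ≤ i ≤ j ≤ n−1, let w ∈ D_n, and let L be an ordered list of distinct elements of ±[n] containing none of i, i+1, …, j+1. Then (s_i s_{i+1}⋯s_j) ⋆ h_{j+1, L}(w) = h_{i, [i+1, …, j+1] ++ (s_i⋯s_j)(L)}( (s_i⋯s_j)·w ), where ⋆ on the left denotes the letterwise extended Demazure action, ++ is concatenation of lists, and (s_i⋯s_j)·w is the ordinary product. -/

import Mathlib

open Equiv

/-- The key of `a : ℤ` in the total order `1 < 2 < ⋯ < n < -n < ⋯ < -2 < -1` on `±[n]`:
elements of `±[n]` get the keys `1, …, 2n` (in order); anything else gets key `2n+1`. -/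
def dkey (n : ℕ) (a : ℤ) : ℤ :=
  if 1 ≤ a ∧ a ≤ (n : ℤ) then a
  else if -(n : ℤ) ≤ a ∧ a ≤ -1 then 2 * n + 1 + a
  else 2 * n + 1

/-- `a < b` in the total order `1 < 2 < ⋯ < n < -n < ⋯ < -2 < -1` on `±[n]`. -/
def dlt (n : ℕ) (a b : ℤ) : Prop := dkey n a < dkey n b

instance (n : ℕ) (a b : ℤ) : Decidable (dlt n a b) :=
  inferInstanceAs (Decidable (dkey n a < dkey n b))

/-- `a` is an element of `±[n] = {1,…,n} ∪ {-1,…,-n}`. -/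
def inPM (n : ℕ) (a : ℤ) : Prop := a ≠ 0 ∧ |a| ≤ (n : ℤ)

instance (n : ℕ) (a : ℤ) : Decidable (inPM n a) :=
  inferInstanceAs (Decidable (a ≠ 0 ∧ |a| ≤ (n : ℤ)))

/-- The element of `±[n]` whose key is `k` (for `1 ≤ k ≤ 2n`). -/
def ofKey (n : ℕ) (k : ℤ) : ℤ := if k ≤ (n : ℤ) then k else k - (2 * n + 1)

/-- A signed permutation of `±[n]`, viewed as a permutation of `ℤ`:
it commutes with negation and fixes everything outside `±[n]`. -/
def IsSignedPerm (n : ℕ) (w : Perm ℤ) : Prop :=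
  (∀ a : ℤ, w (-a) = -(w a)) ∧ ∀ a : ℤ, (n : ℤ) < |a| → w a = a

/-- An even signed permutation of `±[n]`, i.e. an element of the group `D_n`. -/
def IsEvenSignedPerm (n : ℕ) (w : Perm ℤ) : Prop :=
  IsSignedPerm n w ∧ Even ((Finset.Icc (1 : ℤ) (n : ℤ)).filter fun i => w i < 0).card

/-- The simple generators `s_1, …, s_n` of `D_n`:  for `1 ≤ i ≤ n-1`, `s_i` exchanges the
values `i ↔ i+1` and `-i ↔ -(i+1)`;  `s_n` exchanges the values `n-1 ↔ -n` and `n ↔ -(n-1)`. -/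
def sgen (n i : ℕ) : Perm ℤ :=
  if i = n then Equiv.swap ((n : ℤ) - 1) (-(n : ℤ)) * Equiv.swap (n : ℤ) (-((n : ℤ) - 1))
  else Equiv.swap (i : ℤ) ((i : ℤ) + 1) * Equiv.swap (-(i : ℤ)) (-((i : ℤ) + 1))

/-- The product `s_{l₁} s_{l₂} ⋯ s_{l_k}` of the word `l = [l₁, …, l_k]`. -/
def wordProd (n : ℕ) (l : List ℕ) : Perm ℤ := (l.map (sgen n)).prod

/-- The Coxeter length of `w ∈ D_n`: the least length of a word in `s_1, …, s_n` whose
product is `w`. -/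
noncomputable def DLength (n : ℕ) (w : Perm ℤ) : ℕ :=
  sInf {k | ∃ l : List ℕ, (∀ i ∈ l, 1 ≤ i ∧ i ≤ n) ∧ l.length = k ∧ wordProd n l = w}

/-- `dem` is the Demazure product of the Coxeter group `D_n`: the (unique) associative
product on `D_n`, with identity `id`, such that for each simple generator `s` and `u ∈ D_n`,
`s ⋆ u = s·u` if `ℓ(s·u) > ℓ(u)`, and `s ⋆ u = u` if `ℓ(s·u) < ℓ(u)`. -/
def IsDemazure (n : ℕ) (dem : Perm ℤ → Perm ℤ → Perm ℤ) : Prop :=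
  (∀ u v, IsEvenSignedPerm n u → IsEvenSignedPerm n v → IsEvenSignedPerm n (dem u v)) ∧
  (∀ u v w, IsEvenSignedPerm n u → IsEvenSignedPerm n v → IsEvenSignedPerm n w →
      dem (dem u v) w = dem u (dem v w)) ∧
  (∀ u, IsEvenSignedPerm n u → dem 1 u = u ∧ dem u 1 = u) ∧
  (∀ i, 1 ≤ i → i ≤ n → ∀ u, IsEvenSignedPerm n u →
      (DLength n u < DLength n (sgen n i * u) → dem (sgen n i) u = sgen n i * u) ∧
      (DLength n (sgen n i * u) < DLength n u → dem (sgen n i) u = u))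

/-- The swap performed in one step of the hopping procedure: exchange the values `t ↔ q`
and simultaneously `-t ↔ -q` (unless `t = -q`). -/
def hswap (t q : ℤ) : Perm ℤ :=
  if t = -q then Equiv.swap t q else Equiv.swap t q * Equiv.swap (-t) (-q)

/-- `q` is eligible for hopping `t` in `w`: `q ∈ ±[n]`, `q > t` in the order on `±[n]`,
and `q` occurs strictly to the right of `t` in the unfolding of `w`. -/
def HopStep (n : ℕ) (w : Perm ℤ) (t q : ℤ) : Prop :=
  inPM n q ∧ dlt n t q ∧ dkey n (w⁻¹ t) < dkey n (w⁻¹ q) ∧ dkey n (w⁻¹ q) ≤ 2 * n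

instance (n : ℕ) (w : Perm ℤ) (t q : ℤ) : Decidable (HopStep n w t q) :=
  inferInstanceAs (Decidable
    (inPM n q ∧ dlt n t q ∧ dkey n (w⁻¹ t) < dkey n (w⁻¹ q) ∧ dkey n (w⁻¹ q) ≤ 2 * n))

theorem hop_measure (n : ℕ) (w : Perm ℤ) (t q : ℤ) (h : HopStep n w t q) :
    (2 * (n : ℤ) + 1 - dkey n ((hswap t q * w)⁻¹ t)).toNat
      < (2 * (n : ℤ) + 1 - dkey n (w⁻¹ t)).toNat := by
  obtain ⟨⟨hq0, _⟩, _, hlt, hle⟩ := h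
  have key : (hswap t q * w)⁻¹ t = w⁻¹ q := by
    have hs : (hswap t q)⁻¹ t = q := by
      unfold hswap
      split_ifs with he
      · subst he
        simp [Equiv.swap_inv, Equiv.swap_apply_left]
      · have h1 : q ≠ -t := fun hc => he (by omega)
        have h2 : q ≠ -q := fun hc => hq0 (by omega)
        simp [mul_inv_rev, Equiv.swap_inv, Equiv.Perm.mul_apply, Equiv.swap_apply_left,
          Equiv.swap_apply_of_ne_of_ne h1 h2]
    rw [mul_inv_rev, Equiv.Perm.mul_apply, hs]
  rw [key]
  omega

/-- The hopping operator `h_{t,L}`: repeatedly pick the element `q` of `L`, occurring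
latest in `L`, among those greater than `t` occurring strictly to the right of `t` in
the unfolding of `w`; swap the values `t ↔ q` (and `-t ↔ -q`, unless `t = -q`); stop
when no such `q` exists. -/
def hop (n : ℕ) (t : ℤ) (L : List ℤ) (w : Perm ℤ) : Perm ℤ :=
  match h : L.reverse.find? (fun q => decide (HopStep n w t q)) with
  | none => w
  | some q => hop n t L (hswap t q * w)
termination_by (2 * (n : ℤ) + 1 - dkey n (w⁻¹ t)).toNat
decreasing_by
  have hq := List.find?_some h
  simp only [decide_eq_true_eq] at hq
  exact hop_measure n w t q hq

/-- The unfolding `[w(1), …, w(n), -w(n), …, -w(1)]` of a signed permutation `w`. -/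
def unfoldList (n : ℕ) (w : Perm ℤ) : List ℤ :=
  (List.range (2 * n)).map fun p => w (ofKey n ((p : ℤ) + 1))

/-- `w ↖ t`: the ordered list of entries of the unfolding of `w` occurring strictly to the
left of the value `t` and lying strictly between `t` and `-t` in the order on `±[n]`. -/
def liftD (n : ℕ) (w : Perm ℤ) (t : ℤ) : List ℤ :=
  ((unfoldList n w).take (dkey n (w⁻¹ t) - 1).toNat).filter
    fun a => decide (dlt n t a ∧ dlt n a (-t))

/-- `L ∼ₜ L'` : the hopping operators `h_{t,L}` and `h_{t,L'}` agree on all of `D_n`. -/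
def HopEquiv (n : ℕ) (t : ℤ) (L L' : List ℤ) : Prop :=
  ∀ u : Perm ℤ, IsEvenSignedPerm n u → hop n t L u = hop n t L' u

/-- The list `[a, a+1, …, b]` (as integers). -/
def listUp (a b : ℕ) : List ℤ := (List.range (b + 1 - a)).map fun k => (a : ℤ) + k

/-- The list `[-b, -(b-1), …, -a]` (as integers). -/
def listNegUp (a b : ℕ) : List ℤ := (List.range (b + 1 - a)).map fun k => -(b : ℤ) + k

/-- For `1 ≤ i ≤ n-2` : `Q` is one of the minimal coset representatives
(form 0: `id`; form 1: `s_i ⋯ s_j`; form 2: `s_i ⋯ s_{n-2} s_n s_{n-1} ⋯ s_j`;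
form 3: `s_i ⋯ s_{n-2} s_n`). -/
def QForm (n i : ℕ) (Q : Perm ℤ) : Prop :=
  Q = 1 ∨
  (∃ j, i ≤ j ∧ j ≤ n - 1 ∧ Q = wordProd n (List.range' i (j + 1 - i))) ∨
  (∃ j, i ≤ j ∧ j ≤ n - 1 ∧
    Q = wordProd n (List.range' i (n - 1 - i) ++ [n] ++ (List.range' j (n - j)).reverse)) ∨
  Q = wordProd n (List.range' i (n - 1 - i) ++ [n])

/-- `Q` is one of the four elements `id`, `s_{n-1}`, `s_n s_{n-1}`, `s_n` of
`W_{{s_{n-1}, s_n}}`. -/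
def QFormTop (n : ℕ) (Q : Perm ℤ) : Prop :=
  Q = 1 ∨ Q = sgen n (n - 1) ∨ Q = sgen n n * sgen n (n - 1) ∨ Q = sgen n n

/-- For `1 ≤ i ≤ n-2`: `(Q, L)` is a factor of a parabolic factorization together with
its associated list `L_i`. -/
def QList (n i : ℕ) (Q : Perm ℤ) (L : List ℤ) : Prop :=
  (Q = 1 ∧ L = []) ∨
  (∃ j, i ≤ j ∧ j ≤ n - 1 ∧ Q = wordProd n (List.range' i (j + 1 - i)) ∧
    L = listUp (i + 1) (j + 1)) ∨
  (∃ j, i ≤ j ∧ j ≤ n - 1 ∧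
    Q = wordProd n (List.range' i (n - 1 - i) ++ [n] ++ (List.range' j (n - j)).reverse) ∧
    L = listUp (i + 1) n ++ listNegUp (j + 1) n) ∨
  (Q = wordProd n (List.range' i (n - 1 - i) ++ [n]) ∧
    L = listUp (i + 1) (n - 1) ++ [-(n : ℤ)])

/-- `(Q, L)` is the top factor `Q_{n-1}` of a parabolic factorization together with its
associated list `L_{n-1}`. -/
def QListTop (n : ℕ) (Q : Perm ℤ) (L : List ℤ) : Prop :=
  (Q = 1 ∧ L = []) ∨ (Q = sgen n (n - 1) ∧ L = [(n : ℤ)]) ∨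
  (Q = sgen n n * sgen n (n - 1) ∧ L = [(n : ℤ), -(n : ℤ)]) ∨
  (Q = sgen n n ∧ L = [-(n : ℤ)])

/-- The partial product `Q_{n-1} Q_{n-2} ⋯ Q_k` of a parabolic factorization. -/
def prodQ (n : ℕ) (Q : ℕ → Perm ℤ) (k : ℕ) : Perm ℤ :=
  (((List.range' k (n - k)).reverse).map Q).prod

/-- The letterwise extended Demazure action of the generator `s_i` (for `1 ≤ i ≤ n-1`) on an
arbitrary signed permutation: `s_i ⋆ u = s_i·u` if the value `i` occurs strictly to the left
of the value `i+1` in the unfolding of `u`, and `u` otherwise. -/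
def demStep (n i : ℕ) (u : Perm ℤ) : Perm ℤ :=
  if dkey n (u⁻¹ (i : ℤ)) < dkey n (u⁻¹ ((i : ℤ) + 1)) then sgen n i * u else u

/-- The letterwise extended Demazure action of a word:
`(s_{a₁} ⋯ s_{a_k}) ⋆ u = s_{a₁} ⋆ (s_{a₂} ⋆ (⋯ (s_{a_k} ⋆ u)))`. -/
def demWord (n : ℕ) (l : List ℕ) (u : Perm ℤ) : Perm ℤ := l.foldr (demStep n) u

/-- A member of the symmetric group on `±[n]`, viewed as a permutation of `ℤ`:
it fixes `0` and everything of absolute value `> n`. -/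
def IsPermPM (n : ℕ) (w : Perm ℤ) : Prop := ∀ a : ℤ, a = 0 ∨ (n : ℤ) < |a| → w a = a

/-- The simple generators of the symmetric group on `±[n]` (type `A_{2n-1}`):
`agen n k` (for `1 ≤ k ≤ 2n-1`) transposes the order-adjacent elements of `±[n]`
with keys `k` and `k+1`. -/
def agen (n k : ℕ) : Perm ℤ := Equiv.swap (ofKey n (k : ℤ)) (ofKey n ((k : ℤ) + 1))

/-- The Coxeter length of an element of the symmetric group on `±[n]`. -/
noncomputable def ALength (n : ℕ) (w : Perm ℤ) : ℕ :=
  sInf {k | ∃ l : List ℕ, (∀ i ∈ l, 1 ≤ i ∧ i ≤ 2 * n - 1) ∧ l.length = k ∧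
    (l.map (agen n)).prod = w}

/-- `dem` is the Demazure product of the symmetric group on `±[n]`, viewed as a Coxeter
group of type `A_{2n-1}` with simple generators the transpositions of order-adjacent
elements of `±[n]`. -/
def IsDemazureA (n : ℕ) (dem : Perm ℤ → Perm ℤ → Perm ℤ) : Prop :=
  (∀ u v, IsPermPM n u → IsPermPM n v → IsPermPM n (dem u v)) ∧
  (∀ u v w, IsPermPM n u → IsPermPM n v → IsPermPM n w →
      dem (dem u v) w = dem u (dem v w)) ∧
  (∀ u, IsPermPM n u → dem 1 u = u ∧ dem u 1 = u) ∧
  (∀ k, 1 ≤ k → k ≤ 2 * n - 1 → ∀ u, IsPermPM n u →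
      (ALength n u < ALength n (agen n k * u) → dem (agen n k) u = agen n k * u) ∧
      (ALength n (agen n k * u) < ALength n u → dem (agen n k) u = u))


/-!
Induction on the length of `s_i ⋯ s_j`, splitting off the last letter, reduces everything to the
one-letter case `s_i ⋆ h_{i+1,L}(v) = h_{i, [i+1] ++ s_i(L)}(s_i v)`. Conjugation by `s_i` turns a
hop of `i+1` past `q ∈ L` into a hop of `i` past `s_i q`, so `h_{i,s_i(L)}(s_i v) = s_i·u` with
`u = h_{i+1,L}(v)`. Since hopping always takes the latest eligible entry of the list, the extra head
entry `i+1` is considered only once `s_i(L)` is exhausted; it fires exactly when `i+1` precedes `i`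
in `u`, which is the case where the Demazure action does nothing, and the hop back to `u` leaves
no entry of `s_i(L)` eligible.
-/

lemma inPM_iff {n : ℕ} {a : ℤ} : inPM n a ↔ (1 ≤ a ∧ a ≤ n) ∨ (-(n : ℤ) ≤ a ∧ a ≤ -1) := by
  unfold inPM; rw [abs_le]; omega

lemma dkey_of_pos {n : ℕ} {a : ℤ} (h₁ : 1 ≤ a) (h₂ : a ≤ n) : dkey n a = a := by
  unfold dkey; split_ifs <;> omega

lemma dkey_le_iff {n : ℕ} {a : ℤ} : dkey n a ≤ 2 * n ↔ inPM n a := by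
  rw [inPM_iff]; unfold dkey; split_ifs <;> omega

lemma dkey_injOn {n : ℕ} {a b : ℤ} (ha : inPM n a) (hb : inPM n b) (h : dkey n a = dkey n b) :
    a = b := by
  have := inPM_iff.1 ha
  have := inPM_iff.1 hb
  unfold dkey at h; split_ifs at h <;> omega

lemma dkey_neg {n : ℕ} {a : ℤ} (ha : inPM n a) : dkey n (-a) = 2 * n + 1 - dkey n a := by
  rw [inPM_iff] at ha; unfold dkey; split_ifs <;> omega

namespace IsSignedPerm

variable {n : ℕ} {u v : Perm ℤ}

lemma mul (hu : IsSignedPerm n u) (hv : IsSignedPerm n v) : IsSignedPerm n (u * v) :=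
  ⟨fun a => by simp [hv.1 a, hu.1 (v a)], fun a ha => by simp [hv.2 a ha, hu.2 a ha]⟩

lemma inv (hu : IsSignedPerm n u) : IsSignedPerm n u⁻¹ :=
  ⟨fun a => u.injective (by simp [hu.1]), fun a ha => u.injective (by simp [hu.2 a ha])⟩

lemma map_zero (hu : IsSignedPerm n u) : u 0 = 0 := by
  have := hu.1 0
  simp only [neg_zero] at this
  omega

lemma inPM_apply_iff (hu : IsSignedPerm n u) {a : ℤ} : inPM n (u a) ↔ inPM n a := by
  have hfix : ∀ {a}, ¬ inPM n a → u a = a := fun {a} ha => by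
    by_cases h0 : a = 0
    · rw [h0, hu.map_zero]
    · exact hu.2 a (by unfold inPM at ha; push Not at ha; exact ha h0)
  refine ⟨fun h => ?_, fun h => ?_⟩
  · by_contra ha
    exact ha (hfix ha ▸ h)
  · by_contra hua
    exact hua (by rwa [u.injective (hfix hua)])

lemma dkey_inv_apply_le (hu : IsSignedPerm n u) {a : ℤ} (ha : inPM n a) :
    dkey n (u⁻¹ a) ≤ 2 * n :=
  dkey_le_iff.2 (hu.inv.inPM_apply_iff.2 ha)

lemma dkey_inv_apply_neg (hu : IsSignedPerm n u) {a : ℤ} (ha : inPM n a) :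
    dkey n (u⁻¹ (-a)) = 2 * n + 1 - dkey n (u⁻¹ a) := by
  rw [hu.inv.1, dkey_neg (hu.inv.inPM_apply_iff.2 ha)]

lemma dkey_inv_apply_injOn (hu : IsSignedPerm n u) {a b : ℤ} (ha : inPM n a) (hb : inPM n b)
    (h : dkey n (u⁻¹ a) = dkey n (u⁻¹ b)) : a = b :=
  u⁻¹.injective (dkey_injOn (hu.inv.inPM_apply_iff.2 ha) (hu.inv.inPM_apply_iff.2 hb) h)

end IsSignedPerm

lemma hswap_apply {t q : ℤ} (ht : t ≠ 0) (hq : q ≠ 0) (a : ℤ) :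
    hswap t q a = if a = t then q else if a = q then t
      else if a = -t then -q else if a = -q then -t else a := by
  unfold hswap
  split_ifs <;> simp only [Perm.mul_apply, swap_apply_def] <;> split_ifs <;> omega

lemma hswap_signed {n : ℕ} {t q : ℤ} (ht : inPM n t) (hq : inPM n q) :
    IsSignedPerm n (hswap t q) := by
  have := inPM_iff.1 ht
  have := inPM_iff.1 hq
  refine ⟨fun a => ?_, fun a ha => ?_⟩
  · simp only [hswap_apply ht.1 hq.1]
    split_ifs <;> omega
  · simp only [hswap_apply ht.1 hq.1]
    rcases lt_abs.1 ha with h | h <;> split_ifs <;> omega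

lemma hswap_mul_self {t q : ℤ} (ht : t ≠ 0) (hq : q ≠ 0) : hswap t q * hswap t q = 1 := by
  ext a
  simp only [Perm.mul_apply, hswap_apply ht hq, Perm.one_apply]
  split_ifs <;> omega

lemma mul_hswap {σ : Perm ℤ} (hσ : ∀ a, σ (-a) = -σ a) (t q : ℤ) :
    σ * hswap t q = hswap (σ t) (σ q) * σ := by
  unfold hswap
  simp only [← hσ, σ.injective.eq_iff]
  split_ifs
  · exact mul_swap_eq_swap_mul σ t q
  · rw [← mul_assoc, mul_swap_eq_swap_mul σ t q, mul_assoc, mul_swap_eq_swap_mul σ (-t) (-q),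
      mul_assoc]

lemma hopStep_mul_iff {n : ℕ} {σ : Perm ℤ} (hσ : IsSignedPerm n σ) (v : Perm ℤ) {t q : ℤ}
    (hlt : dlt n (σ t) (σ q) ↔ dlt n t q) :
    HopStep n (σ * v) (σ t) (σ q) ↔ HopStep n v t q := by
  have hinv : ∀ a, (σ * v)⁻¹ (σ a) = v⁻¹ a := by simp [mul_inv_rev]
  unfold HopStep
  rw [hinv, hinv, hσ.inPM_apply_iff, hlt]

section Hop

variable {n : ℕ} {t : ℤ} {L : List ℤ} {w : Perm ℤ}

lemma hop_of_find?_eq_none (h : L.reverse.find? (fun q => decide (HopStep n w t q)) = none) :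
    hop n t L w = w := by
  rw [hop, h]

lemma hop_of_find?_eq_some {q : ℤ}
    (h : L.reverse.find? (fun q => decide (HopStep n w t q)) = some q) :
    hop n t L w = hop n t L (hswap t q * w) := by
  rw [hop, h]

lemma find?_hopStep_eq_none (h : ∀ q ∈ L, ¬ HopStep n w t q) :
    L.reverse.find? (fun q => decide (HopStep n w t q)) = none :=
  List.find?_eq_none.2 fun q hq => by simpa using h q (List.mem_reverse.1 hq)

lemma hop_of_forall_not (h : ∀ q ∈ L, ¬ HopStep n w t q) : hop n t L w = w :=
  hop_of_find?_eq_none (find?_hopStep_eq_none h)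

lemma not_hopStep_hop : ∀ q ∈ L, ¬ HopStep n (hop n t L w) t q := by
  induction w using hop.induct n t L with
  | case1 w h =>
    rw [hop_of_find?_eq_none h]
    exact fun q hq => by simpa using List.find?_eq_none.1 h q (List.mem_reverse.2 hq)
  | case2 w q h ih => rwa [hop_of_find?_eq_some h]

lemma hop_cons_of_forall_not (a : ℤ) (h : ∀ q ∈ L, ¬ HopStep n w t q) :
    hop n t (a :: L) w = if HopStep n w t a then hop n t (a :: L) (hswap t a * w) else w := by
  split_ifs with ha
  · exact hop_of_find?_eq_some (by simp [List.find?_append, find?_hopStep_eq_none h, ha])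
  · exact hop_of_find?_eq_none (by simp [List.find?_append, find?_hopStep_eq_none h, ha])

lemma hop_append_hop (M : List ℤ) : hop n t (M ++ L) (hop n t L w) = hop n t (M ++ L) w := by
  induction w using hop.induct n t L with
  | case1 w h => rw [hop_of_find?_eq_none h]
  | case2 w q h ih =>
    rw [hop_of_find?_eq_some h, ih, hop_of_find?_eq_some (L := M ++ L) (w := w) (q := q)]
    simp [List.find?_append, h]

lemma IsSignedPerm.hop (hw : IsSignedPerm n w) : IsSignedPerm n (hop n t L w) := by
  induction w using hop.induct n t L with
  | case1 w h => rwa [hop_of_find?_eq_none h]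
  | case2 w q h ih =>
    obtain ⟨hq, htq, -⟩ : HopStep n w t q := by simpa using List.find?_some h
    have ht : inPM n t := dkey_le_iff.1 ((le_of_lt htq).trans (dkey_le_iff.2 hq))
    rw [hop_of_find?_eq_some h]
    exact ih ((hswap_signed ht hq).mul hw)

lemma find?_hopStep_mul {σ : Perm ℤ} (hσ : IsSignedPerm n σ)
    (hL : ∀ q ∈ L, dlt n (σ t) (σ q) ↔ dlt n t q) (v : Perm ℤ) :
    (L.map σ).reverse.find? (fun q => decide (HopStep n (σ * v) (σ t) q))
      = (L.reverse.find? (fun q => decide (HopStep n v t q))).map σ := by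
  rw [← List.map_reverse, List.find?_map]
  exact congrArg _ (List.find?_congr fun q hq => by
    simp [hopStep_mul_iff hσ v (hL q (List.mem_reverse.1 hq))])

lemma hop_map_mul {σ : Perm ℤ} (hσ : IsSignedPerm n σ)
    (hL : ∀ q ∈ L, dlt n (σ t) (σ q) ↔ dlt n t q) :
    hop n (σ t) (L.map σ) (σ * w) = σ * hop n t L w := by
  induction w using hop.induct n t L with
  | case1 w h =>
    rw [hop_of_find?_eq_none h, hop_of_find?_eq_none (by rw [find?_hopStep_mul hσ hL, h]; rfl)]
  | case2 w q h ih =>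
    rw [hop_of_find?_eq_some h, ← ih,
      hop_of_find?_eq_some (by rw [find?_hopStep_mul hσ hL, h]; rfl), ← mul_assoc,
      ← mul_hswap hσ.1, mul_assoc]

end Hop

section Generator

variable {n i : ℕ}

lemma sgen_eq_hswap (h : i ≠ n) : sgen n i = hswap i (i + 1) := by
  unfold sgen hswap
  rw [if_neg h, if_neg (by omega)]

lemma sgen_apply (hi : 1 ≤ i) (hin : i < n) (a : ℤ) :
    sgen n i a = if a = i then (i : ℤ) + 1 else if a = (i : ℤ) + 1 then (i : ℤ)
      else if a = -(i : ℤ) then -((i : ℤ) + 1) else if a = -((i : ℤ) + 1) then -(i : ℤ) else a := by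
  rw [sgen_eq_hswap hin.ne, hswap_apply (by omega) (by omega)]

lemma sgen_signed (hi : 1 ≤ i) (hin : i < n) : IsSignedPerm n (sgen n i) := by
  rw [sgen_eq_hswap hin.ne]
  exact hswap_signed (inPM_iff.2 (by omega)) (inPM_iff.2 (by omega))

lemma sgen_mul_self (hi : 1 ≤ i) (hin : i < n) : sgen n i * sgen n i = 1 := by
  rw [sgen_eq_hswap hin.ne]
  exact hswap_mul_self (by omega) (by omega)

lemma sgen_sgen (hi : 1 ≤ i) (hin : i < n) (a : ℤ) : sgen n i (sgen n i a) = a := by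
  rw [← Perm.mul_apply, sgen_mul_self hi hin, Perm.one_apply]

lemma mem_map_sgen_iff (hi : 1 ≤ i) (hin : i < n) {L : List ℤ} {a : ℤ} :
    a ∈ L.map (sgen n i) ↔ sgen n i a ∈ L := by
  conv_lhs => rw [← sgen_sgen hi hin a]
  exact List.mem_map_of_injective (sgen n i).injective

lemma dlt_sgen_iff (hi : 1 ≤ i) (hin : i < n) {q : ℤ} (hq : q ≠ i) (hq' : q ≠ i + 1) :
    dlt n i (sgen n i q) ↔ dlt n (i + 1) q := by
  rw [sgen_apply hi hin]
  unfold dlt dkey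
  split_ifs <;> omega

lemma hopStep_sgen_mul_iff (hi : 1 ≤ i) (hin : i < n) (v : Perm ℤ) {q : ℤ} (hq : q ≠ i)
    (hq' : q ≠ i + 1) :
    HopStep n (sgen n i * v) i (sgen n i q) ↔ HopStep n v (i + 1) q := by
  have hs : sgen n i (i + 1) = i := by simp [sgen_apply hi hin]
  have := hopStep_mul_iff (sgen_signed hi hin) v (t := i + 1) (q := q)
    (by rw [hs]; exact dlt_sgen_iff hi hin hq hq')
  rwa [hs] at this

lemma hop_sgen_mul (hi : 1 ≤ i) (hin : i < n) {L : List ℤ} (hL : (i : ℤ) ∉ L)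
    (hL' : (i : ℤ) + 1 ∉ L) (w : Perm ℤ) :
    hop n i (L.map (sgen n i)) (sgen n i * w) = sgen n i * hop n (i + 1) L w := by
  have hs : sgen n i (i + 1) = i := by simp [sgen_apply hi hin]
  have := hop_map_mul (t := i + 1) (L := L) (w := w) (sgen_signed hi hin) fun q hq => by
    rw [hs]
    exact dlt_sgen_iff hi hin (ne_of_mem_of_not_mem hq hL) (ne_of_mem_of_not_mem hq hL')
  rwa [hs] at this

lemma hopStep_sgen_mul_self_iff (hi : 1 ≤ i) (hin : i < n) {u : Perm ℤ} (hu : IsSignedPerm n u) :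
    HopStep n (sgen n i * u) i (i + 1) ↔ dkey n (u⁻¹ (i + 1)) < dkey n (u⁻¹ i) := by
  have hinv : ∀ a, (sgen n i * u)⁻¹ a = u⁻¹ (sgen n i a) := fun a => by
    rw [mul_inv_rev, inv_eq_of_mul_eq_one_left (sgen_mul_self hi hin), Perm.mul_apply]
  have hs : sgen n i i = i + 1 := by simp [sgen_apply hi hin]
  have hs' : sgen n i (i + 1) = i := by simp [sgen_apply hi hin]
  unfold HopStep
  rw [hinv, hinv, hs, hs']
  refine ⟨fun h => h.2.2.1, fun h => ⟨inPM_iff.2 (by omega), ?_, h, hu.dkey_inv_apply_le ?_⟩⟩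
  · unfold dlt
    rw [dkey_of_pos (by omega) (by omega), dkey_of_pos (by omega) (by omega)]
    omega
  · exact inPM_iff.2 (by omega)

lemma not_hopStep_sgen_apply (hi : 1 ≤ i) (hin : i < n) {u : Perm ℤ} (hu : IsSignedPerm n u)
    (hlt : dkey n (u⁻¹ (i + 1)) < dkey n (u⁻¹ i)) {q : ℤ} (hq : q ≠ i) (hq' : q ≠ i + 1)
    (h : ¬ HopStep n u (i + 1) q) : ¬ HopStep n u i (sgen n i q) := by
  rintro ⟨hsq, hdlt, hpos, -⟩
  have hqpm := (sgen_signed hi hin).inPM_apply_iff.1 hsq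
  refine h ⟨hqpm, (dlt_sgen_iff hi hin hq hq').1 hdlt, ?_, hu.dkey_inv_apply_le hqpm⟩
  have hipm : inPM n i := inPM_iff.2 (by omega)
  have hi1pm : inPM n (i + 1) := inPM_iff.2 (by omega)
  have neg_i := hu.dkey_inv_apply_neg hipm
  have neg_i1 := hu.dkey_inv_apply_neg hi1pm
  rw [sgen_apply hi hin] at hpos
  split_ifs at hpos <;> (try subst_vars) <;> omega

lemma demStep_eq_hop (hi : 1 ≤ i) (hin : i < n) {u : Perm ℤ} (hu : IsSignedPerm n u) {L : List ℤ}
    (hL : (i : ℤ) ∉ L) (hL' : (i : ℤ) + 1 ∉ L) (hterm : ∀ q ∈ L, ¬ HopStep n u (i + 1) q) :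
    demStep n i u = hop n i ((i + 1) :: L.map (sgen n i)) (sgen n i * u) := by
  have hne : ∀ q ∈ L, q ≠ i ∧ q ≠ i + 1 := fun q hq =>
    ⟨ne_of_mem_of_not_mem hq hL, ne_of_mem_of_not_mem hq hL'⟩
  rw [hop_cons_of_forall_not _ fun q' hq' => by
    obtain ⟨q, hq, rfl⟩ := List.mem_map.1 hq'
    rw [hopStep_sgen_mul_iff hi hin u (hne q hq).1 (hne q hq).2]
    exact hterm q hq]
  simp only [hopStep_sgen_mul_self_iff hi hin hu]
  have hpos_ne : dkey n (u⁻¹ i) ≠ dkey n (u⁻¹ (i + 1)) := fun h => by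
    have := hu.dkey_inv_apply_injOn (inPM_iff.2 (by omega)) (inPM_iff.2 (by omega)) h
    omega
  unfold demStep
  by_cases hleft : dkey n (u⁻¹ i) < dkey n (u⁻¹ (i + 1))
  · rw [if_pos hleft, if_neg (by omega)]
  · have hright : dkey n (u⁻¹ (i + 1)) < dkey n (u⁻¹ i) := by omega
    rw [if_neg hleft, if_pos hright, ← sgen_eq_hswap hin.ne, ← mul_assoc, sgen_mul_self hi hin,
      one_mul]
    refine (hop_of_forall_not ?_).symm
    rintro q' (_ | ⟨_, hq'⟩)
    · exact fun h => by have := h.2.2.1; omega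
    · obtain ⟨q, hq, rfl⟩ := List.mem_map.1 hq'
      exact not_hopStep_sgen_apply hi hin hu hright (hne q hq).1 (hne q hq).2 (hterm q hq)

lemma demStep_hop (hi : 1 ≤ i) (hin : i < n) {w : Perm ℤ} (hw : IsSignedPerm n w) {L : List ℤ}
    (hL : (i : ℤ) ∉ L) (hL' : (i : ℤ) + 1 ∉ L) :
    demStep n i (hop n (i + 1) L w) = hop n i ((i + 1) :: L.map (sgen n i)) (sgen n i * w) := by
  rw [demStep_eq_hop hi hin hw.hop hL hL' not_hopStep_hop, ← hop_sgen_mul hi hin hL hL']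
  exact hop_append_hop [(i : ℤ) + 1]

end Generator

lemma wordProd_append_singleton (n : ℕ) (l : List ℕ) (a : ℕ) :
    wordProd n (l ++ [a]) = wordProd n l * sgen n a := by
  simp [wordProd]

lemma demWord_append_singleton (n : ℕ) (l : List ℕ) (a : ℕ) (u : Perm ℤ) :
    demWord n (l ++ [a]) u = demWord n l (demStep n a u) := by
  simp [demWord]

lemma wordProd_apply_of_forall {n : ℕ} {l : List ℕ} {a : ℤ} (h : ∀ k ∈ l, sgen n k a = a) :
    wordProd n l a = a := by
  induction l with
  | nil => rfl
  | cons b l ih =>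
    rw [List.forall_mem_cons] at h
    simp [wordProd, Perm.mul_apply] at ih ⊢
    rw [ih h.2, h.1]

lemma listUp_succ {a b : ℕ} (h : a ≤ b + 1) : listUp a (b + 1) = listUp a b ++ [(b : ℤ) + 1] := by
  rw [listUp, listUp, show b + 1 + 1 - a = b + 1 - a + 1 by omega, List.range_succ]
  simp
  omega

lemma demWord_range'_hop {n i : ℕ} (hi : 1 ≤ i) (m : ℕ) (him : i + m ≤ n) {w : Perm ℤ}
    (hw : IsSignedPerm n w) {L : List ℤ} (hL : ∀ k : ℕ, i ≤ k → k ≤ i + m → (k : ℤ) ∉ L) :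
    demWord n (List.range' i m) (hop n ((i + m : ℕ) : ℤ) L w)
      = hop n i (listUp (i + 1) (i + m) ++ L.map (wordProd n (List.range' i m)))
          (wordProd n (List.range' i m) * w) := by
  induction m generalizing w L with
  | zero => simp [demWord, wordProd, listUp]
  | succ m ih =>
    have hj : i + m < n := by omega
    have hj1 : ((i + m : ℕ) : ℤ) + 1 ∉ L := by exact_mod_cast hL (i + m + 1) (by omega) le_rfl
    have hL' : ∀ k : ℕ, i ≤ k → k ≤ i + m →
        (k : ℤ) ∉ (((i + m : ℕ) : ℤ) + 1) :: L.map (sgen n (i + m)) := by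
      intro k hik hkm
      rw [List.mem_cons, mem_map_sgen_iff (by omega) hj, sgen_apply (by omega) hj]
      rcases hkm.lt_or_eq with hkm | rfl
      · rw [if_neg (by omega), if_neg (by omega), if_neg (by omega), if_neg (by omega)]
        exact fun h => h.elim (by omega) (hL k hik (by omega))
      · rw [if_pos rfl]
        exact fun h => h.elim (by omega) hj1
    have hfix : wordProd n (List.range' i m) (((i + m : ℕ) : ℤ) + 1) = ((i + m : ℕ) : ℤ) + 1 :=
      wordProd_apply_of_forall fun k hk => by
        rw [List.mem_range'_1] at hk
        rw [sgen_apply (by omega) (by omega)]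
        split_ifs <;> omega
    rw [List.range'_concat, one_mul, demWord_append_singleton, wordProd_append_singleton,
      show ((i + (m + 1) : ℕ) : ℤ) = ((i + m : ℕ) : ℤ) + 1 by push_cast; ring,
      demStep_hop (by omega) hj hw (hL _ (by omega) (by omega)) hj1, ih (by omega)
      ((sgen_signed (by omega) hj).mul hw) hL', List.map_cons, List.map_map, hfix, ← Perm.coe_mul,
      mul_assoc, ← List.singleton_append, ← List.append_assoc, ← Nat.add_assoc,
      listUp_succ (by omega)]

theorem extended_demazure_hop_general (n : ℕ) (i j : ℕ)
    (hi : 1 ≤ i) (hij : i ≤ j) (hj : j ≤ n - 1)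
    (w : Perm ℤ) (hw : IsEvenSignedPerm n w)
    (L : List ℤ)
    (havoid : ∀ k : ℕ, i ≤ k → k ≤ j + 1 → (k : ℤ) ∉ L) :
    demWord n (List.range' i (j + 1 - i)) (hop n ((j : ℤ) + 1) L w)
      = hop n (i : ℤ)
          (listUp (i + 1) (j + 1) ++ L.map ⇑(wordProd n (List.range' i (j + 1 - i))))
          (wordProd n (List.range' i (j + 1 - i)) * w) := by
  have hlen : i + (j + 1 - i) = j + 1 := by omega
  have h := demWord_range'_hop hi (j + 1 - i) (by omega) hw.1 fun k hik _ => havoid k hik (by omega)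
  rwa [hlen, Nat.cast_succ] at h

/-- for `1 ≤ i ≤ j ≤ n-1`, `w ∈ D_n` and a list `L` of distinct elements of
`±[n]` containing none of `i, …, j+1`,
`(s_i ⋯ s_j) ⋆ h_{j+1,L}(w) = h_{i, [i+1,…,j+1] ++ (s_i⋯s_j)(L)}((s_i ⋯ s_j)·w)`,
where `⋆` is the letterwise extended Demazure action. -/
theorem extended_demazure_hop (n : ℕ) (hn : 2 ≤ n) (i j : ℕ)
    (hi : 1 ≤ i) (hij : i ≤ j) (hj : j ≤ n - 1)
    (w : Perm ℤ) (hw : IsEvenSignedPerm n w)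
    (L : List ℤ) (hnd : L.Nodup) (hmem : ∀ a ∈ L, inPM n a)
    (havoid : ∀ k : ℕ, i ≤ k → k ≤ j + 1 → (k : ℤ) ∉ L) :
    demWord n (List.range' i (j + 1 - i)) (hop n ((j : ℤ) + 1) L w)
      = hop n (i : ℤ)
          (listUp (i + 1) (j + 1) ++ L.map ⇑(wordProd n (List.range' i (j + 1 - i))))
          (wordProd n (List.range' i (j + 1 - i)) * w) :=
  extended_demazure_hop_general n i j hi hij hj w hw L havoid
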